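/- Let G = A ∗_C B be an amalgamated free product, formed from injective group homomorphisms i : C → A and j : C → B. If a ∈ A is such that the image of a in G is conjugate in G to an element of the image of C in G, then a is conjugate in A to an element of the image i(C): there exist a' ∈ A and c ∈ C with a = a' · i(c) · a'⁻¹. -/

import Mathlib

/-!
Model the amalgam as `PushoutI` over `Bool`. We may assume `a ∉ i(C)`. Write
`k⁻¹ = c₀ · x₁ ⋯ xₙ` with `c₀` in the image of `C` and `x₁ ⋯ xₙ` a reduced word. Then
`a = xₙ⁻¹ ⋯ x₂⁻¹ (x₁⁻¹ c' x₁) x₂ ⋯ xₙ` with `c' = c₀⁻¹ c c₀`. If `x₁⁻¹ c' x₁` lies in the image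
of `C`, absorb it and recurse on the shorter word. Otherwise the right-hand side is a reduced word
of length `2n - 1` that represents the one-letter reduced word `a`; uniqueness of normal forms
forces `n = 1` and `x₁ ∈ A`.
-/

open Function Monoid Monoid.CoprodI Monoid.PushoutI.NormalWord

namespace List

theorem isChain_ne_reverse_append_cons {α : Type*} {a : α} {l : List α}
    (h : (a :: l).IsChain (· ≠ ·)) : (l.reverse ++ a :: l).IsChain (· ≠ ·) := by
  obtain ⟨ha, hl⟩ := isChain_cons.1 h
  refine isChain_append.2 ⟨isChain_reverse.2 (hl.imp fun _ _ => Ne.symm), h, ?_⟩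
  intro x hx y hy
  rw [getLast?_reverse] at hx
  rw [head?_cons, Option.mem_some_iff] at hy
  exact hy ▸ (ha x hx).symm

end List

namespace Monoid.PushoutI

variable {ι H : Type*} {G : ι → Type*} [Group H] [∀ i, Group (G i)] {φ : ∀ i, H →* G i}

variable (φ) in
def listProd (L : List (Σ i, G i)) : PushoutI φ :=
  (L.map fun l => of l.1 l.2).prod

@[simp] theorem listProd_nil : listProd φ ([] : List (Σ i, G i)) = 1 := rfl

@[simp] theorem listProd_cons (l : Σ i, G i) (L : List (Σ i, G i)) :
    listProd φ (l :: L) = of l.1 l.2 * listProd φ L := by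
  simp [listProd]

@[simp] theorem listProd_append (L₁ L₂ : List (Σ i, G i)) :
    listProd φ (L₁ ++ L₂) = listProd φ L₁ * listProd φ L₂ := by
  simp [listProd]

def invRev (L : List (Σ i, G i)) : List (Σ i, G i) :=
  (L.map fun l => ⟨l.1, l.2⁻¹⟩).reverse

@[simp] theorem listProd_invRev (L : List (Σ i, G i)) :
    listProd φ (invRev L) = (listProd φ L)⁻¹ := by
  induction L with
  | nil => rfl
  | cons l L ih => simp_all [invRev]

variable (φ) in
/-- The list of letters of a word in `CoprodI G` that is `PushoutI.Reduced`. -/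
def IsReducedList (L : List (Σ i, G i)) : Prop :=
  (L.map Sigma.fst).IsChain (· ≠ ·) ∧ ∀ l ∈ L, l.2 ∉ (φ l.1).range

namespace IsReducedList

variable {L : List (Σ i, G i)}

def toWord (hL : IsReducedList φ L) : Word G where
  toList := L
  ne_one l hl h1 := hL.2 l hl (h1 ▸ one_mem _)
  chain_ne := List.isChain_map _ |>.1 hL.1

theorem reduced_toWord (hL : IsReducedList φ L) : Reduced φ hL.toWord := hL.2

theorem ofCoprodI_prod_toWord (hL : IsReducedList φ L) :
    ofCoprodI hL.toWord.prod = listProd φ L := by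
  simp only [Word.prod, toWord, map_list_prod, List.map_map, listProd]
  rfl

theorem map_fst_eq_of_listProd_eq (hφ : ∀ i, Injective (φ i)) {L' : List (Σ i, G i)}
    (hL : IsReducedList φ L) (hL' : IsReducedList φ L') (h : listProd φ L = listProd φ L') :
    L.map Sigma.fst = L'.map Sigma.fst := by
  classical
  obtain ⟨d⟩ := transversal_nonempty φ hφ
  obtain ⟨w, hw, hwL⟩ := hL.reduced_toWord.exists_normalWord_prod_eq d
  obtain ⟨w', hw', hwL'⟩ := hL'.reduced_toWord.exists_normalWord_prod_eq d
  have hww' : w = w' := NormalWord.prod_injective <| by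
    rw [hw, hw', ofCoprodI_prod_toWord, ofCoprodI_prod_toWord, h]
  exact hwL.symm.trans (hww' ▸ hwL')

theorem singleton {i : ι} {g : G i} (hg : g ∉ (φ i).range) : IsReducedList φ [⟨i, g⟩] :=
  ⟨List.isChain_singleton _, by simpa using hg⟩

theorem tail {l : Σ i, G i} (hL : IsReducedList φ (l :: L)) : IsReducedList φ L :=
  ⟨(List.isChain_cons.1 hL.1).2, fun l' hl' => hL.2 l' (List.mem_cons_of_mem _ hl')⟩

theorem invRev_append_cons {i : ι} {x y : G i} (hL : IsReducedList φ (⟨i, x⟩ :: L))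
    (hy : y ∉ (φ i).range) : IsReducedList φ (invRev L ++ ⟨i, y⟩ :: L) := by
  refine ⟨?_, ?_⟩
  · simpa [invRev, List.map_reverse, List.map_map, Function.comp_def] using
      List.isChain_ne_reverse_append_cons hL.1
  · simp only [invRev, List.mem_append, List.mem_reverse, List.mem_map, List.mem_cons]
    rintro l (⟨l', hl', rfl⟩ | rfl | hl)
    · exact fun hr => hL.tail.2 l' hl' (inv_mem_iff.1 hr)
    · exact hy
    · exact hL.tail.2 l hl

end IsReducedList

theorem not_mem_range_of_mem_set (d : Transversal φ) {i : ι} {g : G i}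
    (hg : g ∈ d.set i) (hg1 : g ≠ 1) : g ∉ (φ i).range := fun hr =>
  hg1 (congrArg (fun p => p.1.1) ((d.compl i).1
    (a₁ := (⟨g, hr⟩, ⟨1, d.one_mem i⟩)) (a₂ := (1, ⟨g, hg⟩)) (by simp)))

theorem exists_eq_base_mul_listProd (hφ : ∀ i, Injective (φ i)) (k : PushoutI φ) :
    ∃ (h : H) (L : List (Σ i, G i)), IsReducedList φ L ∧ k = base φ h * listProd φ L := by
  classical
  obtain ⟨d⟩ := transversal_nonempty φ hφ
  set w : NormalWord d := NormalWord.equiv k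
  have hL : IsReducedList φ w.toList :=
    ⟨List.isChain_map _ |>.2 w.chain_ne, fun l hl =>
      not_mem_range_of_mem_set d (w.normalized l.1 l.2 hl) (w.ne_one l hl)⟩
  refine ⟨w.head, w.toList, hL, ?_⟩
  rw [← hL.ofCoprodI_prod_toWord]
  exact (NormalWord.equiv.symm_apply_apply k).symm

theorem exists_eq_conj_of_of_eq_listProd_conj_base (hφ : ∀ i, Injective (φ i)) {i₀ : ι}
    {a : G i₀} (ha : a ∉ (φ i₀).range) :
    ∀ {L : List (Σ i, G i)}, IsReducedList φ L → ∀ {c : H},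
      of i₀ a = (listProd φ L)⁻¹ * base φ c * listProd φ L →
      ∃ (a' : G i₀) (c' : H), a = a' * φ i₀ c' * a'⁻¹
  | [], _, c, h => absurd ⟨c, of_injective hφ i₀ (by simpa [of_apply_eq_base] using h.symm)⟩ ha
  | ⟨i, x⟩ :: L, hL, c, h => by
    set y := x⁻¹ * φ i c * x
    have hy : of i₀ a = (listProd φ L)⁻¹ * of i y * listProd φ L := by
      rw [h]
      simp [y, ← of_apply_eq_base φ i, mul_assoc]
    by_cases hyr : y ∈ (φ i).range
    · obtain ⟨c₁, hc₁⟩ := hyr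
      exact exists_eq_conj_of_of_eq_listProd_conj_base hφ ha hL.tail
        (by rwa [← hc₁, of_apply_eq_base] at hy)
    · have hV := (hL.invRev_append_cons hyr).map_fst_eq_of_listProd_eq hφ
        (IsReducedList.singleton ha) (by simp [hy, mul_assoc])
      obtain ⟨rfl, rfl⟩ : L = [] ∧ i = i₀ := by
        cases L
        · simpa [invRev] using hV
        · have hlen := congrArg List.length hV
          grind [invRev]
      exact ⟨x⁻¹, c, by simpa [y] using of_injective hφ i hy⟩

theorem exists_eq_conj_of_of_eq_conj_base (hφ : ∀ i, Injective (φ i)) {i₀ : ι} {a : G i₀}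
    {k : PushoutI φ} {c : H} (h : of i₀ a = k * base φ c * k⁻¹) :
    ∃ (a' : G i₀) (c' : H), a = a' * φ i₀ c' * a'⁻¹ := by
  by_cases ha : a ∈ (φ i₀).range
  · obtain ⟨c₀, rfl⟩ := ha
    exact ⟨1, c₀, by simp⟩
  obtain ⟨h₀, L, hL, hk⟩ := exists_eq_base_mul_listProd hφ k⁻¹
  refine exists_eq_conj_of_of_eq_listProd_conj_base hφ ha hL (c := h₀⁻¹ * c * h₀) ?_
  rw [h, ← inv_inv k, hk]
  simp [mul_assoc]

end Monoid.PushoutI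

section Amalgam

universe u

variable {A B C : Type u} [Group A] [Group B] [Group C]

def AmalgamFactor (A B : Type u) : Bool → Type u
  | true => A
  | false => B

instance AmalgamFactor.instGroup : ∀ b, Group (AmalgamFactor A B b)
  | true => ‹Group A›
  | false => ‹Group B›

def amalgamHom (i : C →* A) (j : C →* B) : ∀ b, C →* AmalgamFactor A B b
  | true => i
  | false => j

theorem amalgamHom_injective {i : C →* A} {j : C →* B} (hi : Injective i) (hj : Injective j) :
    ∀ b, Injective (amalgamHom i j b)
  | true => hi
  | false => hj

end Amalgam

theorem stmt_15_general {A B C G : Type} [Group A] [Group B] [Group C] [Group G]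
    (i : C →* A) (j : C →* B) (hi : Function.Injective i) (hj : Function.Injective j)
    (iA : A →* G) (iB : B →* G)
    (huniv : ∀ (H : Type) [Group H] (f : A →* H) (g : B →* H),
      f.comp i = g.comp j → ∃! h : G →* H, h.comp iA = f ∧ h.comp iB = g)
    (a : A) (c : C) (k : G) (hconj : iA a = k * iA (i c) * k⁻¹) :
    ∃ (a' : A) (c' : C), a = a' * i c' * a'⁻¹ := by
  let φ := amalgamHom i j
  obtain ⟨h, ⟨hA, -⟩, -⟩ := huniv (PushoutI φ) (PushoutI.of (φ := φ) true)
    (PushoutI.of (φ := φ) false)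
    ((PushoutI.of_comp_eq_base true).trans (PushoutI.of_comp_eq_base false).symm)
  have hA' (x : A) : h (iA x) = PushoutI.of (φ := φ) true x := DFunLike.congr_fun hA x
  refine PushoutI.exists_eq_conj_of_of_eq_conj_base (amalgamHom_injective hi hj)
    (i₀ := true) (a := a) (k := h k) (c := c) ?_
  rw [← hA', ← PushoutI.of_apply_eq_base φ true, hconj, map_mul, map_mul, map_inv, hA']
  rfl

/-- Let `G = A ∗_C B` be the amalgamated free product of injective homomorphisms
`i : C → A` and `j : C → B`; this is expressed by saying that `G`, together with
homomorphisms `iA : A → G` and `iB : B → G` satisfying `iA ∘ i = iB ∘ j`, is the pushout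
of `i` and `j` in the category of groups.  If the image in `G` of an element `a ∈ A` is
conjugate in `G` to an element of the image of `C`, then `a` is conjugate in `A` to an
element of `i(C)`. -/
theorem stmt_15 {A B C G : Type} [Group A] [Group B] [Group C] [Group G]
    (i : C →* A) (j : C →* B) (hi : Function.Injective i) (hj : Function.Injective j)
    (iA : A →* G) (iB : B →* G) (hcomm : iA.comp i = iB.comp j)
    (huniv : ∀ (H : Type) [Group H] (f : A →* H) (g : B →* H),
      f.comp i = g.comp j → ∃! h : G →* H, h.comp iA = f ∧ h.comp iB = g)
    (a : A) (c : C) (k : G) (hconj : iA a = k * iA (i c) * k⁻¹) :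
    ∃ (a' : A) (c' : C), a = a' * i c' * a'⁻¹ :=
  stmt_15_general i j hi hj iA iB huniv a c k hconj
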